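/- For every positive natural number n, the double sum over k from 0 to floor(log2 n) and i from 0 to 2^k - 1 of floor((n+i)/2^(k+1)) equals (n/2)*(floor(log2 n) + 1) - sum over k from 0 to floor(log2 n) of 2^k * Zigzag(n/2^(k+1)). -/

import Mathlib

def Zigzag (x : ℚ) : ℚ := min (x - ⌊x⌋) (⌈x⌉ - x)

/-!
Fix a level `k`, put `h = 2 ^ k` and write `n = 2h q + r` with `r < 2h`. Of the numbers `n + i`,
`i < h`, exactly `max 0 (r - h)` reach the next multiple of `2h`, so the inner sum is
`h q + max 0 (r - h)`. On the other side `n / 2 = h q + r / 2` and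
`h · Zigzag (n / 2h) = min (r / 2) (h - r / 2)`, whose difference is the same number.
Summing over the `log₂ n + 1` levels gives the identity.
-/

open Finset

-- `n % m + h - m` is truncated: it counts the `i < h` for which `n + i` passes a multiple of `m`.
theorem Nat.sum_range_add_div {m : ℕ} (hm : 0 < m) (n : ℕ) {h : ℕ} (hhm : h ≤ m) :
    ∑ i ∈ range h, (n + i) / m = h * (n / m) + (n % m + h - m) := by
  have hr : n % m < m := Nat.mod_lt n hm
  induction h with
  | zero => simp only [sum_range_zero, zero_mul]; omega
  | succ h ih =>
    rw [sum_range_succ, ih (by omega), Nat.add_div hm, Nat.div_eq_of_lt (by omega : h < m),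
      Nat.mod_eq_of_lt (by omega : h < m)]
    split_ifs <;> grind

theorem zigzag_eq_min_fract (x : ℚ) : Zigzag x = min (Int.fract x) (1 - Int.fract x) := by
  rcases Int.fract_eq_zero_or_add_one_sub_ceil x with h | h
  · obtain ⟨z, rfl⟩ := Int.fract_eq_zero_iff.mp h
    simp [Zigzag]
  · rw [Zigzag, Int.self_sub_floor, h]
    ring_nf

theorem sum_range_floor_add_div_two_mul (n : ℕ) {h : ℕ} (hh : 0 < h) :
    ((∑ i ∈ range h, ⌊((n : ℚ) + i) / (2 * h)⌋ : ℤ) : ℚ) = n / 2 - h * Zigzag (n / (2 * h)) := by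
  have hfloor (i : ℕ) : ⌊((n : ℚ) + i) / (2 * h)⌋ = ((n + i) / (2 * h) : ℕ) := by
    exact_mod_cast Rat.floor_natCast_div_natCast (n + i) (2 * h)
  have hfract : Int.fract ((n : ℚ) / (2 * h)) = (n % (2 * h) : ℕ) / (2 * h) := by
    exact_mod_cast Int.fract_div_natCast_eq_div_natCast_mod (m := n) (n := 2 * h)
  simp only [hfloor]
  rw [← Nat.cast_sum, Nat.sum_range_add_div (by omega) n (by omega), zigzag_eq_min_fract, hfract]
  have hn := Nat.div_add_mod n (2 * h)
  generalize n / (2 * h) = q at *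
  generalize n % (2 * h) = r at *
  subst hn
  have hhQ : (0 : ℚ) < h := by exact_mod_cast hh
  have hhalf : (h : ℚ) * (r / (2 * h)) = r / 2 := by field_simp
  rw [mul_min_of_nonneg _ _ hhQ.le, mul_one_sub, hhalf]
  rcases le_or_gt r h with hrh | hrh
  · have hrhQ : (r : ℚ) ≤ h := by exact_mod_cast hrh
    rw [show r + h - 2 * h = 0 by omega, min_eq_left (by linarith)]
    push_cast; ring
  · have hrhQ : (h : ℚ) < r := by exact_mod_cast hrh
    rw [show r + h - 2 * h = r - h by omega, min_eq_right (by linarith)]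
    push_cast [Nat.cast_sub hrh.le]; ring

theorem double_sum_floor_eq_general (n : ℕ) :
    ((∑ k ∈ Finset.range (Nat.log 2 n + 1), ∑ i ∈ Finset.range (2 ^ k),
        ⌊((n : ℚ) + i) / 2 ^ (k + 1)⌋ : ℤ) : ℚ)
      = (n : ℚ) / 2 * (Nat.log 2 n + 1)
        - ∑ k ∈ Finset.range (Nat.log 2 n + 1),
            2 ^ k * Zigzag ((n : ℚ) / 2 ^ (k + 1)) := by
  have hlevel (k : ℕ) : ((∑ i ∈ range (2 ^ k), ⌊((n : ℚ) + i) / 2 ^ (k + 1)⌋ : ℤ) : ℚ)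
      = n / 2 - 2 ^ k * Zigzag (n / 2 ^ (k + 1)) := by
    simpa [pow_succ'] using sum_range_floor_add_div_two_mul n (Nat.two_pow_pos k)
  rw [Int.cast_sum, sum_congr rfl fun k _ => hlevel k, sum_sub_distrib, sum_const, card_range,
    nsmul_eq_mul]
  push_cast
  ring

theorem double_sum_floor_eq (n : ℕ) (hn : 0 < n) :
    ((∑ k ∈ Finset.range (Nat.log 2 n + 1), ∑ i ∈ Finset.range (2 ^ k),
        ⌊((n : ℚ) + i) / 2 ^ (k + 1)⌋ : ℤ) : ℚ)
      = (n : ℚ) / 2 * (Nat.log 2 n + 1)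
        - ∑ k ∈ Finset.range (Nat.log 2 n + 1),
            2 ^ k * Zigzag ((n : ℚ) / 2 ^ (k + 1)) :=
  double_sum_floor_eq_general n
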